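/- On the energy surface K₊⁻¹(0), i.e. where |q|(|p|²+1) = 2, the Hamiltonian vector field of K₊(q,p) = |q|(|p|²+1) − 2 equals 2|q| times the Hamiltonian vector field of H(q,p) = |p|²/2 − 1/|q|; explicitly X_{K₊} = (2|q|p, −((|p|²+1)/|q|)q) = 2|q|(p, −q/|q|³). -/

import Mathlib

open scoped RealInnerProductSpace

noncomputable section

abbrev E3 := EuclideanSpace ℝ (Fin 3)

/-- Kepler Hamiltonian. -/
def keplerH (qp : E3 × E3) : ℝ := ‖qp.2‖ ^ 2 / 2 - ‖qp.1‖⁻¹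

/-- K₊(q,p) = |q|(|p|²+1) − 2. -/
def Kplus (qp : E3 × E3) : ℝ := ‖qp.1‖ * (‖qp.2‖ ^ 2 + 1) - 2

lemma hasGradientAt_normSq (x : E3) : HasGradientAt (fun y : E3 => ‖y‖ ^ 2) ((2:ℝ) • x) x := by
  rw [hasGradientAt_iff_hasFDerivAt]
  convert (hasStrictFDerivAt_norm_sq x).hasFDerivAt using 1
  ext y
  simp [real_inner_smul_left]
  ext y
  simp [real_inner_smul_left]

lemma aux_comp {f : E3 → ℝ} {g x : E3} {φ : ℝ → ℝ} {c : ℝ}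
    (hf : HasGradientAt f g x) (hφ : HasDerivAt φ c (f x)) :
    HasGradientAt (fun y => φ (f y)) (c • g) x := by
  rw [hasGradientAt_iff_hasFDerivAt] at hf ⊢
  rw [map_smul]
  exact hφ.comp_hasFDerivAt x hf

lemma hasGradientAt_norm {x : E3} (hx : x ≠ 0) :
    HasGradientAt (fun y : E3 => ‖y‖) (‖x‖⁻¹ • x) x := by
  have hnx : ‖x‖ ≠ 0 := norm_ne_zero_iff.mpr hx
  have h1 : HasDerivAt Real.sqrt (1 / (2 * Real.sqrt (‖x‖^2))) (‖x‖^2) :=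
    Real.hasDerivAt_sqrt (by positivity)
  have h2 := aux_comp (hasGradientAt_normSq x) h1
  rw [Real.sqrt_sq (norm_nonneg x), smul_smul] at h2
  have : (1 / (2 * ‖x‖)) * 2 = ‖x‖⁻¹ := by field_simp
  rw [this] at h2
  exact h2.congr_of_eventuallyEq (by filter_upwards with y using (Real.sqrt_sq (norm_nonneg y)).symm)

lemma hasGradientAt_inv_norm {x : E3} (hx : x ≠ 0) :
    HasGradientAt (fun y : E3 => ‖y‖⁻¹) (-(‖x‖^3)⁻¹ • x) x := by
  have hnx : ‖x‖ ≠ 0 := norm_ne_zero_iff.mpr hx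
  have h2 := aux_comp (hasGradientAt_norm hx) (hasDerivAt_inv hnx)
  rw [smul_smul] at h2
  have : -(‖x‖^2)⁻¹ * ‖x‖⁻¹ = -(‖x‖^3)⁻¹ := by field_simp
  rwa [this] at h2

/-- On K₊⁻¹(0), the Hamiltonian vector field X_{K₊} = (∂K₊/∂p, −∂K₊/∂q) equals
(2|q|p, −((|p|²+1)/|q|)q) = 2|q|·(p, −q/|q|³) = 2|q|·X_H. -/
theorem kplus_vector_field (q p : E3) (hq : q ≠ 0)
    (hlevel : ‖q‖ * (‖p‖ ^ 2 + 1) = 2) :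
    gradient (fun p' : E3 => Kplus (q, p')) p = (2 * ‖q‖) • p ∧
    gradient (fun q' : E3 => Kplus (q', p)) q = ((‖p‖ ^ 2 + 1) / ‖q‖) • q ∧
    ((‖p‖ ^ 2 + 1) / ‖q‖) • q = (2 * ‖q‖) • ((‖q‖ ^ 3)⁻¹ • q) ∧
    gradient (fun p' : E3 => Kplus (q, p')) p =
      (2 * ‖q‖) • gradient (fun p' : E3 => keplerH (q, p')) p ∧
    gradient (fun q' : E3 => Kplus (q', p)) q =
      (2 * ‖q‖) • gradient (fun q' : E3 => keplerH (q', p)) q := by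
  have hnq : ‖q‖ ≠ 0 := norm_ne_zero_iff.mpr hq
  -- gradient of K₊ in p
  have hKp : HasGradientAt (fun p' : E3 => Kplus (q, p')) ((2 * ‖q‖) • p) p := by
    have hφ : HasDerivAt (fun t : ℝ => ‖q‖ * (t + 1) - 2) ‖q‖ (‖p‖ ^ 2) := by
      simpa using (((hasDerivAt_id (‖p‖ ^ 2)).add_const 1).const_mul ‖q‖).sub_const 2
    have := aux_comp (hasGradientAt_normSq p) hφ
    rw [smul_smul] at this
    simpa [Kplus, mul_comm] using this
  -- gradient of K₊ in q
  have hKq : HasGradientAt (fun q' : E3 => Kplus (q', p)) (((‖p‖ ^ 2 + 1) / ‖q‖) • q) q := by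
    have hφ : HasDerivAt (fun t : ℝ => t * (‖p‖ ^ 2 + 1) - 2) (‖p‖ ^ 2 + 1) ‖q‖ := by
      simpa using ((hasDerivAt_id ‖q‖).mul_const (‖p‖ ^ 2 + 1)).sub_const 2
    have := aux_comp (hasGradientAt_norm hq) hφ
    rw [smul_smul] at this
    simpa [Kplus, div_eq_mul_inv] using this
  -- gradient of H in p
  have hHp : HasGradientAt (fun p' : E3 => keplerH (q, p')) p p := by
    have hφ : HasDerivAt (fun t : ℝ => t / 2 - ‖q‖⁻¹) (1 / 2) (‖p‖ ^ 2) := by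
      simpa using ((hasDerivAt_id (‖p‖ ^ 2)).div_const 2).sub_const ‖q‖⁻¹
    have := aux_comp (hasGradientAt_normSq p) hφ
    rw [smul_smul] at this
    norm_num at this
    simpa [keplerH] using this
  -- gradient of H in q
  have hHq : HasGradientAt (fun q' : E3 => keplerH (q', p)) ((‖q‖ ^ 3)⁻¹ • q) q := by
    have hφ : HasDerivAt (fun t : ℝ => ‖p‖ ^ 2 / 2 - t) (-1) ‖q‖⁻¹ := by
      simpa using (hasDerivAt_id (‖q‖⁻¹)).const_sub (‖p‖ ^ 2 / 2)
    have := aux_comp (hasGradientAt_inv_norm hq) hφ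
    rw [smul_smul] at this
    have h3 : (-1 : ℝ) * -(‖q‖ ^ 3)⁻¹ = (‖q‖ ^ 3)⁻¹ := by ring
    rw [h3] at this
    simpa [keplerH] using this
  have hscal : ((‖p‖ ^ 2 + 1) / ‖q‖) • q = (2 * ‖q‖) • ((‖q‖ ^ 3)⁻¹ • q) := by
    rw [smul_smul]
    congr 1
    have h2 : ‖p‖ ^ 2 + 1 = 2 / ‖q‖ := by rw [eq_div_iff hnq]; linarith [hlevel]
    rw [h2]
    field_simp
  refine ⟨hKp.gradient, hKq.gradient, hscal, ?_, ?_⟩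
  · rw [hKp.gradient, hHp.gradient]
  · rw [hKq.gradient, hHq.gradient, ← hscal]

end
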